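/- Let α > 0, c ∈ ℝⁿ, γ > 0, μ > 0, and let B(u) = −ln(α − ‖u − c‖²) if ‖u − c‖² < α and B(u) = +∞ otherwise. Then for every x ∈ ℝⁿ, the unique minimizer over u ∈ ℝⁿ of (1/2)‖x − u‖² + γμ B(u) is φ(x, μ, γ) = c + ((α − κ(x, μ, γ)²)/(α − κ(x, μ, γ)² + 2γμ)) (x − c), where κ(x, μ, γ) is the unique solution in [0, √α) of the cubic equation z³ − ‖x − c‖ z² − (α + 2γμ) z + α‖x − c‖ = 0. -/

import Mathlib

/-!
Write `w` for the claimed minimizer and `s = α - ‖w - c‖²`. Since `-log` lies above its tangent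
at `s`, the barrier term is bounded below by `(γμ / s) ‖u - c‖²` plus a constant, with equality
at `u = w`. The resulting quadratic `½‖x - u‖² + (γμ / s)‖u - c‖²` is strictly convex, and its
first-order condition `x - w = (2γμ / s) (w - c)` holds at `w`: this is exactly the cubic
equation for `κ = ‖w - c‖`.
-/

/-- Logarithmic barrier of the Euclidean ball `{u : ‖u - c‖² ≤ α}`. -/
noncomputable def ballBarrier {n : ℕ} (α : ℝ) (c u : EuclideanSpace ℝ (Fin n)) : EReal :=
  if ‖u - c‖ ^ 2 < α then ((- Real.log (α - ‖u - c‖ ^ 2) : ℝ) : EReal) else ⊤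

/-- The objective `u ↦ (1/2)‖x-u‖² + γμ B(u)` defining `prox_{γμB}(x)`. -/
noncomputable def ballProxObj {n : ℕ} (α : ℝ) (c : EuclideanSpace ℝ (Fin n)) (γ μ : ℝ)
    (x u : EuclideanSpace ℝ (Fin n)) : EReal :=
  ((1 / 2 * ‖x - u‖ ^ 2 : ℝ) : EReal) + ((γ * μ : ℝ) : EReal) * ballBarrier α c u

section InnerProductSpace

variable {E : Type*} [NormedAddCommGroup E] [InnerProductSpace ℝ E]

theorem half_norm_sub_sq_add_mul_norm_sub_sq_eq {t : ℝ} {x c w : E}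
    (hw : x - w = (2 * t) • (w - c)) (u : E) :
    1 / 2 * ‖x - u‖ ^ 2 + t * ‖u - c‖ ^ 2 =
      1 / 2 * ‖x - w‖ ^ 2 + t * ‖w - c‖ ^ 2 + (1 / 2 + t) * ‖u - w‖ ^ 2 := by
  have hxu : x - u = (x - w) - (u - w) := by abel
  have huc : u - c = (u - w) + (w - c) := by abel
  rw [hxu, huc, norm_sub_sq_real, norm_add_sq_real, hw, real_inner_smul_left,
    real_inner_comm (u - w)]
  ring

theorem barrier_objective_lt_of_stationary {α ρ : ℝ} (hρ : 0 ≤ ρ) {x c w u : E}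
    (hw : ‖w - c‖ ^ 2 < α) (hstat : x - w = (2 * ρ / (α - ‖w - c‖ ^ 2)) • (w - c))
    (hu : ‖u - c‖ ^ 2 < α) (huw : u ≠ w) :
    1 / 2 * ‖x - w‖ ^ 2 - ρ * Real.log (α - ‖w - c‖ ^ 2) <
      1 / 2 * ‖x - u‖ ^ 2 - ρ * Real.log (α - ‖u - c‖ ^ 2) := by
  set s := α - ‖w - c‖ ^ 2
  have hs : 0 < s := sub_pos.2 hw
  have hsu : 0 < α - ‖u - c‖ ^ 2 := sub_pos.2 hu
  have hquad := half_norm_sub_sq_add_mul_norm_sub_sq_eq (t := ρ / s) (w := w)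
    (by rwa [← mul_div_assoc]) u
  have htangent : Real.log (α - ‖u - c‖ ^ 2) - Real.log s ≤ (α - ‖u - c‖ ^ 2) / s - 1 := by
    rw [← Real.log_div hsu.ne' hs.ne']
    exact Real.log_le_sub_one_of_pos (div_pos hsu hs)
  have hbarrier : ρ * (Real.log (α - ‖u - c‖ ^ 2) - Real.log s) ≤
      ρ / s * (‖w - c‖ ^ 2 - ‖u - c‖ ^ 2) := by
    calc ρ * (Real.log (α - ‖u - c‖ ^ 2) - Real.log s)
        ≤ ρ * ((α - ‖u - c‖ ^ 2) / s - 1) := mul_le_mul_of_nonneg_left htangent hρ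
      _ = ρ / s * (‖w - c‖ ^ 2 - ‖u - c‖ ^ 2) := by field_simp; ring
  have hgap : 0 < (1 / 2 + ρ / s) * ‖u - w‖ ^ 2 := by
    have : 0 < ‖u - w‖ := norm_pos_iff.2 (sub_ne_zero.2 huw)
    positivity
  linarith

theorem norm_sub_center_of_cubic {α δ k : ℝ} {x c : E} (hk : k ^ 2 < α)
    (hδ : 0 ≤ δ) (hcubic : k ^ 3 - ‖x - c‖ * k ^ 2 - (α + δ) * k + α * ‖x - c‖ = 0) :
    ‖c + ((α - k ^ 2) / (α - k ^ 2 + δ)) • (x - c) - c‖ = k := by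
  have hs : 0 < α - k ^ 2 := sub_pos.2 hk
  rw [add_sub_cancel_left, norm_smul, Real.norm_of_nonneg (by positivity), div_mul_eq_mul_div,
    div_eq_iff (by positivity)]
  linear_combination hcubic

theorem sub_eq_smul_sub_center {α δ k : ℝ} {x c : E} (hk : k ^ 2 < α) (hδ : 0 ≤ δ) :
    x - (c + ((α - k ^ 2) / (α - k ^ 2 + δ)) • (x - c)) =
      (δ / (α - k ^ 2)) • (c + ((α - k ^ 2) / (α - k ^ 2 + δ)) • (x - c) - c) := by
  have hs : 0 < α - k ^ 2 := sub_pos.2 hk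
  have hcoef : δ / (α - k ^ 2) * ((α - k ^ 2) / (α - k ^ 2 + δ)) =
      1 - (α - k ^ 2) / (α - k ^ 2 + δ) := by
    field_simp
    ring
  rw [add_sub_cancel_left, smul_smul, hcoef, sub_smul, one_smul]
  abel

end InnerProductSpace

theorem ballProxObj_of_lt {n : ℕ} {α γ μ : ℝ} {c x u : EuclideanSpace ℝ (Fin n)}
    (hu : ‖u - c‖ ^ 2 < α) :
    ballProxObj α c γ μ x u =
      ((1 / 2 * ‖x - u‖ ^ 2 - γ * μ * Real.log (α - ‖u - c‖ ^ 2) : ℝ) : EReal) := by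
  rw [ballProxObj, ballBarrier, if_pos hu, ← EReal.coe_mul, ← EReal.coe_add]
  ring_nf

theorem ballProxObj_of_not_lt {n : ℕ} {α γ μ : ℝ} {c x u : EuclideanSpace ℝ (Fin n)}
    (hγμ : 0 < γ * μ) (hu : ¬‖u - c‖ ^ 2 < α) :
    ballProxObj α c γ μ x u = ⊤ := by
  rw [ballProxObj, ballBarrier, if_neg hu, EReal.coe_mul_top_of_pos hγμ,
    EReal.add_top_of_ne_bot (EReal.coe_ne_bot _)]

theorem ball_barrier_prox_general {n : ℕ} (α : ℝ) (c : EuclideanSpace ℝ (Fin n))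
    (γ μ : ℝ) (hγ : 0 < γ) (hμ : 0 < μ)
    (κ : EuclideanSpace ℝ (Fin n) → ℝ)
    (hκ : ∀ x : EuclideanSpace ℝ (Fin n), κ x ∈ Set.Ico 0 (Real.sqrt α) ∧
      (κ x) ^ 3 - ‖x - c‖ * (κ x) ^ 2 - (α + 2 * γ * μ) * (κ x) + α * ‖x - c‖ = 0) :
    ∀ x u : EuclideanSpace ℝ (Fin n),
      u ≠ c + ((α - (κ x) ^ 2) / (α - (κ x) ^ 2 + 2 * γ * μ)) • (x - c) →
      ballProxObj α c γ μ x (c + ((α - (κ x) ^ 2) / (α - (κ x) ^ 2 + 2 * γ * μ)) • (x - c))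
        < ballProxObj α c γ μ x u := by
  intro x u hu
  obtain ⟨⟨hk0, hk⟩, hcubic⟩ := hκ x
  have hγμ : 0 < γ * μ := mul_pos hγ hμ
  have hδ : 0 ≤ 2 * γ * μ := by positivity
  have hk2 : κ x ^ 2 < α := (Real.lt_sqrt hk0).1 hk
  set w := c + ((α - κ x ^ 2) / (α - κ x ^ 2 + 2 * γ * μ)) • (x - c)
  have hwc : ‖w - c‖ = κ x := norm_sub_center_of_cubic hk2 hδ hcubic
  have hw : ‖w - c‖ ^ 2 < α := by rwa [hwc]
  have hstat : x - w = (2 * (γ * μ) / (α - ‖w - c‖ ^ 2)) • (w - c) := by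
    rw [hwc, ← mul_assoc]
    exact sub_eq_smul_sub_center hk2 hδ
  rw [ballProxObj_of_lt hw]
  by_cases hu' : ‖u - c‖ ^ 2 < α
  · rw [ballProxObj_of_lt hu', EReal.coe_lt_coe_iff]
    exact barrier_objective_lt_of_stationary hγμ.le hw hstat hu' hu
  · rw [ballProxObj_of_not_lt hγμ hu']
    exact EReal.coe_lt_top _

theorem ball_barrier_prox {n : ℕ} (α : ℝ) (hα : 0 < α) (c : EuclideanSpace ℝ (Fin n))
    (γ μ : ℝ) (hγ : 0 < γ) (hμ : 0 < μ)
    (κ : EuclideanSpace ℝ (Fin n) → ℝ)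
    (hκ : ∀ x : EuclideanSpace ℝ (Fin n), κ x ∈ Set.Ico 0 (Real.sqrt α) ∧
      (κ x) ^ 3 - ‖x - c‖ * (κ x) ^ 2 - (α + 2 * γ * μ) * (κ x) + α * ‖x - c‖ = 0) :
    ∀ x u : EuclideanSpace ℝ (Fin n),
      u ≠ c + ((α - (κ x) ^ 2) / (α - (κ x) ^ 2 + 2 * γ * μ)) • (x - c) →
      ballProxObj α c γ μ x (c + ((α - (κ x) ^ 2) / (α - (κ x) ^ 2 + 2 * γ * μ)) • (x - c))
        < ballProxObj α c γ μ x u :=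
  ball_barrier_prox_general α c γ μ hγ hμ κ hκ
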